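/- arXiv:0801.2658 — 2 statements merged into one kernel-verified Lean document; each statement's English description precedes it below -/
import Mathlib

section
/- There exist functions g, γ : ℝ → ℝ such that γ is locally (Lebesgue) integrable, g(t) = ∫_0^t γ(s) ds for all t ∈ ℝ, g is bounded, ∫_0^∞ g(t)² dt < ∞, sup_{t∈ℝ} ∫_t^{t+1} |γ(s)| ds < ∞, and yet g(t) does not tend to 0 as t → ∞ (indeed g(n) = 1 for all integers n ≥ 2, so limsup_{t→∞} g(t) ≥ 1). -/
open MeasureTheory Set Filter


noncomputable def gam : ℝ → ℝ := fun s =>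
  if (2:ℝ) ≤ (⌊s + 1/2⌋ : ℝ) ∧ (⌊s + 1/2⌋ : ℝ) - 1/(⌊s + 1/2⌋ : ℝ)^2 < s ∧ s < (⌊s + 1/2⌋ : ℝ)
  then ((⌊s + 1/2⌋ : ℝ))^2
  else if (2:ℝ) ≤ (⌊s + 1/2⌋ : ℝ) ∧ (⌊s + 1/2⌋ : ℝ) < s ∧ s < (⌊s + 1/2⌋ : ℝ) + 1/(⌊s + 1/2⌋ : ℝ)^2
  then -((⌊s + 1/2⌋ : ℝ))^2 else 0

noncomputable def gg : ℝ → ℝ := fun t =>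
  if (2:ℝ) ≤ (⌊t + 1/2⌋ : ℝ) ∧ |t - (⌊t + 1/2⌋ : ℝ)| ≤ 1/(⌊t + 1/2⌋ : ℝ)^2
  then 1 - (⌊t + 1/2⌋ : ℝ)^2 * |t - (⌊t + 1/2⌋ : ℝ)| else 0

lemma measurable_F : Measurable (fun s : ℝ => (⌊s + 1/2⌋ : ℝ)) := by
  apply Measurable.comp (measurable_from_top) (Int.measurable_floor.comp (by measurability))

lemma measurable_gam : Measurable gam := by
  unfold gam
  have hF := measurable_F
  refine Measurable.ite ?_ (by measurability) (Measurable.ite ?_ (by measurability) measurable_const)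
  · exact ((measurableSet_le measurable_const hF).inter
      ((measurableSet_lt (hF.sub ((hF.pow_const 2).inv.const_mul 1)) measurable_id).inter
        (measurableSet_lt measurable_id hF)))
  · exact ((measurableSet_le measurable_const hF).inter
      ((measurableSet_lt hF measurable_id).inter
        (measurableSet_lt measurable_id (hF.add ((hF.pow_const 2).inv.const_mul 1)))))

lemma measurable_gg : Measurable gg := by
  unfold gg
  have hF := measurable_F
  have habs : Measurable (fun t : ℝ => |t - (⌊t + 1/2⌋ : ℝ)|) := (measurable_id.sub hF).abs
  refine Measurable.ite ?_ (by measurability) measurable_const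
  exact (measurableSet_le measurable_const hF).inter
    (measurableSet_le habs ((hF.pow_const 2).inv.const_mul 1))

lemma intConst {f : ℝ → ℝ} {a b c : ℝ} (hab : a ≤ b) (h : ∀ x ∈ Set.Ioo a b, f x = c) :
    ∫ x in a..b, f x = c * (b - a) := by
  have h1 : ∀ᵐ x ∂(volume : Measure ℝ), x ∈ Set.uIoc a b → f x = c := by
    have hb : ∀ᵐ x : ℝ ∂volume, x ≠ b := by
      rw [ae_iff]
      simpa using measure_singleton (b : ℝ)
    filter_upwards [hb] with x hx hmem
    rw [Set.uIoc_of_le hab] at hmem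
    exact h x ⟨hmem.1, lt_of_le_of_ne hmem.2 hx⟩
  rw [intervalIntegral.integral_congr_ae h1, intervalIntegral.integral_const, smul_eq_mul, mul_comm]

lemma floor_half {k : ℤ} {s : ℝ} (h1 : (k:ℝ) - 1/2 ≤ s) (h2 : s < (k:ℝ) + 1/2) :
    ⌊s + 1/2⌋ = k := by
  rw [Int.floor_eq_iff]
  refine ⟨by linarith, by push_cast; linarith⟩

lemma gam_eq {k : ℤ} {s : ℝ} (h1 : (k:ℝ) - 1/2 ≤ s) (h2 : s < (k:ℝ) + 1/2) :
    gam s = if (2:ℝ) ≤ (k:ℝ) ∧ (k:ℝ) - 1/(k:ℝ)^2 < s ∧ s < (k:ℝ) then ((k:ℝ))^2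
      else if (2:ℝ) ≤ (k:ℝ) ∧ (k:ℝ) < s ∧ s < (k:ℝ) + 1/(k:ℝ)^2 then -((k:ℝ))^2 else 0 := by
  unfold gam; rw [floor_half h1 h2]

lemma gg_eq {k : ℤ} {t : ℝ} (h1 : (k:ℝ) - 1/2 ≤ t) (h2 : t < (k:ℝ) + 1/2) :
    gg t = if (2:ℝ) ≤ (k:ℝ) ∧ |t - (k:ℝ)| ≤ 1/(k:ℝ)^2 then 1 - (k:ℝ)^2 * |t - (k:ℝ)| else 0 := by
  unfold gg; rw [floor_half h1 h2]

lemma gam_bound (s : ℝ) : |gam s| ≤ (|s| + 1)^2 := by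
  have hle : (⌊s + 1/2⌋ : ℝ) ≤ s + 1/2 := Int.floor_le _
  have hgt : s + 1/2 - 1 < (⌊s + 1/2⌋ : ℝ) := Int.sub_one_lt_floor _
  have habs : |(⌊s + 1/2⌋ : ℝ)| ≤ |s| + 1 := by
    rw [abs_le]
    constructor <;> [nlinarith [neg_abs_le s]; nlinarith [le_abs_self s]]
  have hsq : ((⌊s + 1/2⌋ : ℝ))^2 ≤ (|s| + 1)^2 := by
    calc ((⌊s + 1/2⌋ : ℝ))^2 = |(⌊s + 1/2⌋ : ℝ)|^2 := (sq_abs _).symm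
    _ ≤ (|s| + 1)^2 := by
        apply pow_le_pow_left₀ (abs_nonneg _) habs
  unfold gam
  split_ifs with h1 h2
  · rwa [abs_of_nonneg (sq_nonneg _)]
  · rwa [abs_neg, abs_of_nonneg (sq_nonneg _)]
  · simpa using sq_nonneg (|s| + 1)

lemma gam_loc : LocallyIntegrable gam volume := by
  rw [locallyIntegrable_iff]
  intro K hK
  obtain ⟨r, hr⟩ := hK.isBounded.subset_closedBall 0
  apply Measure.integrableOn_of_bounded (M := (r + 1)^2) hK.measure_lt_top.ne
    measurable_gam.aestronglyMeasurable
  refine ae_restrict_of_forall_mem hK.measurableSet fun s hs => ?_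
  have : |s| ≤ r := by simpa [Real.closedBall_eq_Icc, abs_le] using hr hs
  calc ‖gam s‖ = |gam s| := rfl
  _ ≤ (|s| + 1)^2 := gam_bound s
  _ ≤ (r + 1)^2 := by nlinarith [abs_nonneg s]

lemma gam_ii (a b : ℝ) : IntervalIntegrable gam volume a b :=
  (gam_loc.integrableOn_isCompact isCompact_uIcc).intervalIntegrable

lemma gam_abs_ii (a b : ℝ) : IntervalIntegrable (fun s => |gam s|) volume a b :=
  (gam_ii a b).abs

lemma gg_val {k : ℤ} (hk : 2 ≤ k) {t : ℝ} (h1 : (k:ℝ) - 1/2 ≤ t) (h2 : t < (k:ℝ) + 1/2)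
    (h3 : |t - (k:ℝ)| ≤ 1/(k:ℝ)^2) : gg t = 1 - (k:ℝ)^2 * |t - (k:ℝ)| := by
  have hK2 : (2:ℝ) ≤ (k:ℝ) := by exact_mod_cast hk
  rw [gg_eq h1 h2, if_pos ⟨hK2, h3⟩]

lemma gg_val0 {k : ℤ} (hk : 2 ≤ k) {t : ℝ} (h1 : (k:ℝ) - 1/2 ≤ t) (h2 : t < (k:ℝ) + 1/2)
    (h3 : 1/(k:ℝ)^2 ≤ |t - (k:ℝ)|) : gg t = 0 := by
  have hK2 : (2:ℝ) ≤ (k:ℝ) := by exact_mod_cast hk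
  have hKpos : (0:ℝ) < (k:ℝ)^2 := by nlinarith
  rw [gg_eq h1 h2]
  split_ifs with h
  · have : |t - (k:ℝ)| = 1/(k:ℝ)^2 := le_antisymm h.2 h3
    rw [this]; field_simp; norm_num
  · rfl

lemma spike {k : ℤ} (hk : 2 ≤ k) {t : ℝ} (h1 : (k:ℝ) - 1/2 ≤ t) (h2 : t ≤ (k:ℝ) + 1/2) :
    ∫ s in ((k:ℝ) - 1/2)..t, gam s = gg t := by
  have hK2 : (2:ℝ) ≤ (k:ℝ) := by exact_mod_cast hk
  set K := (k:ℝ) with hKdef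
  have hKsq : (4:ℝ) ≤ K^2 := by nlinarith
  have hKpos : (0:ℝ) < K^2 := by nlinarith
  have he : 0 < 1/K^2 := by positivity
  have he4 : 1/K^2 ≤ 1/4 := by rw [div_le_div_iff₀ hKpos (by norm_num)]; linarith
  have hKe : K^2 * (1/K^2) = 1 := by field_simp
  -- values of gam on the four subintervals
  have v1 : ∀ x ∈ Ioo (K - 1/2) (K - 1/K^2), gam x = 0 := by
    intro x hx
    rw [gam_eq (k := k) (le_of_lt hx.1) (by simp only [← hKdef]; linarith [hx.2])]
    rw [if_neg (by push_neg; intro _ h; exact absurd hx.2 (not_lt.2 (le_of_lt h)))]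
    rw [if_neg (by push_neg; intro _ h; linarith [hx.2])]
  have v2 : ∀ x ∈ Ioo (K - 1/K^2) K, gam x = K^2 := by
    intro x hx
    rw [gam_eq (k := k) (by simp only [← hKdef]; linarith [hx.1]) (by simp only [← hKdef]; linarith [hx.2])]
    rw [if_pos ⟨hK2, hx.1, hx.2⟩]
  have v3 : ∀ x ∈ Ioo K (K + 1/K^2), gam x = -K^2 := by
    intro x hx
    rw [gam_eq (k := k) (by simp only [← hKdef]; linarith [hx.1]) (by simp only [← hKdef]; linarith [hx.2])]
    rw [if_neg (by push_neg; intro _ _; linarith [hx.1]), if_pos ⟨hK2, hx.1, hx.2⟩]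
  have v4 : ∀ x ∈ Ioo (K + 1/K^2) (K + 1/2), gam x = 0 := by
    intro x hx
    rw [gam_eq (k := k) (by simp only [← hKdef]; linarith [hx.1]) (by simp only [← hKdef]; linarith [hx.2])]
    rw [if_neg (by push_neg; intro _ _; linarith [hx.1]),
        if_neg (by push_neg; intro _ _; linarith [hx.1])]
  have I1 : ∫ s in (K - 1/2)..(K - 1/K^2), gam s = 0 := by
    rw [intConst (by linarith) v1]; ring
  have I2 : ∀ u, K - 1/K^2 ≤ u → u ≤ K → ∫ s in (K - 1/2)..u, gam s = 1 - K^2 * (K - u) := by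
    intro u hu1 hu2
    rw [← intervalIntegral.integral_add_adjacent_intervals (gam_ii (K - 1/2) (K - 1/K^2)) (gam_ii _ u), I1]
    rw [intConst hu1 (fun x hx => v2 x ⟨hx.1, lt_of_lt_of_le hx.2 hu2⟩)]
    have : K^2 * (u - (K - 1/K^2)) = K^2 * (u - K) + K^2 * (1/K^2) := by ring
    rw [this, hKe]; ring
  have I3 : ∀ u, K ≤ u → u ≤ K + 1/K^2 → ∫ s in (K - 1/2)..u, gam s = 1 - K^2 * (u - K) := by
    intro u hu1 hu2
    rw [← intervalIntegral.integral_add_adjacent_intervals (gam_ii (K - 1/2) K) (gam_ii _ u),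
      I2 K (by linarith) le_rfl]
    rw [intConst hu1 (fun x hx => v3 x ⟨hx.1, lt_of_lt_of_le hx.2 hu2⟩)]
    ring
  rcases le_or_gt t (K - 1/K^2) with hc | hc
  · rw [intConst h1 (fun x hx => v1 x ⟨hx.1, lt_of_lt_of_le hx.2 hc⟩)]
    rw [gg_val0 hk h1 (by simp only [← hKdef]; linarith) (by rw [abs_of_nonpos (by linarith)]; linarith)]
    ring
  · rcases le_or_gt t K with hc2 | hc2
    · rw [I2 t (le_of_lt hc) hc2,
        gg_val hk h1 (by simp only [← hKdef]; linarith) (by rw [abs_of_nonpos (by linarith)]; linarith),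
        abs_of_nonpos (by linarith)]
      ring
    · rcases le_or_gt t (K + 1/K^2) with hc3 | hc3
      · rw [I3 t (le_of_lt hc2) hc3,
          gg_val hk h1 (by simp only [← hKdef]; linarith) (by rw [abs_of_nonneg (by linarith)]; linarith),
          abs_of_nonneg (by linarith)]
      · have I4 : ∫ s in (K - 1/2)..(K + 1/K^2), gam s = 0 := by
          rw [I3 (K + 1/K^2) (by linarith) le_rfl]
          have : K^2 * (K + 1/K^2 - K) = K^2 * (1/K^2) := by ring
          rw [this, hKe]; ring
        rw [← intervalIntegral.integral_add_adjacent_intervals (gam_ii (K - 1/2) (K + 1/K^2)) (gam_ii _ t), I4,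
          intConst (le_of_lt hc3) (fun x hx => v4 x ⟨hx.1, lt_of_lt_of_le hx.2 h2⟩)]
        rcases eq_or_lt_of_le h2 with heq | hlt
        · rw [heq]
          have hf : ⌊(K + 1/2 : ℝ) + 1/2⌋ = k + 1 := by
            apply floor_half (k := k + 1) <;> push_cast <;> simp only [← hKdef] <;> linarith
          unfold gg
          rw [hf]
          rw [if_neg]
          · ring
          · push_neg
            intro _
            push_cast
            simp only [← hKdef]
            have h9 : (9:ℝ) ≤ (K + 1)^2 := by nlinarith
            have : |K + 1/2 - (K + 1)| = 1/2 := by rw [show K + 1/2 - (K+1) = -(1/2) by ring, abs_neg, abs_of_nonneg]; norm_num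
            rw [this]
            rw [div_lt_div_iff₀ (by nlinarith) (by norm_num)]
            nlinarith
        · rw [gg_val0 hk h1 (by simp only [← hKdef]; linarith) (by rw [abs_of_nonneg (by linarith)]; linarith)]
          ring

lemma gam_zero {s : ℝ} (hs : s ≤ 3/2) : gam s = 0 := by
  have hle : (⌊s + 1/2⌋ : ℝ) ≤ s + 1/2 := Int.floor_le _
  unfold gam
  split_ifs with h1 h2
  · exfalso
    have h2eq : (⌊s + 1/2⌋ : ℝ) = 2 := le_antisymm (by linarith) h1.1
    rw [h2eq] at h1
    have := h1.2.1
    norm_num at this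
    linarith
  · exfalso
    have h2eq : (⌊s + 1/2⌋ : ℝ) = 2 := le_antisymm (by linarith) h2.1
    rw [h2eq] at h2
    linarith [h2.2.1]
  · rfl

lemma gg_zero {t : ℝ} (ht : t ≤ 3/2) : gg t = 0 := by
  have hle : (⌊t + 1/2⌋ : ℝ) ≤ t + 1/2 := Int.floor_le _
  unfold gg
  split_ifs with h1
  · exfalso
    have h2eq : (⌊t + 1/2⌋ : ℝ) = 2 := le_antisymm (by linarith) h1.1
    rw [h2eq] at h1
    have := h1.2
    norm_num at this
    rw [abs_le] at this
    linarith [this.1]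
  · rfl

lemma spikeAbs (k : ℤ) : ∫ s in ((k:ℝ) - 1/2)..((k:ℝ) + 1/2), |gam s| ≤ 2 := by
  set K := (k:ℝ) with hKdef
  rcases le_or_gt 2 k with hk | hk
  · have hK2 : (2:ℝ) ≤ K := by rw [hKdef]; exact_mod_cast hk
    have hKsq : (4:ℝ) ≤ K^2 := by nlinarith
    have hKpos : (0:ℝ) < K^2 := by nlinarith
    have he : 0 < 1/K^2 := by positivity
    have he4 : 1/K^2 ≤ 1/4 := by rw [div_le_div_iff₀ hKpos (by norm_num)]; linarith
    have hKe : K^2 * (1/K^2) = 1 := by field_simp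
    have v1 : ∀ x ∈ Ioo (K - 1/2) (K - 1/K^2), |gam x| = 0 := by
      intro x hx
      rw [gam_eq (k := k) (le_of_lt hx.1) (by simp only [← hKdef]; linarith [hx.2])]
      rw [if_neg (by push_neg; intro _ h; exact absurd hx.2 (not_lt.2 (le_of_lt h)))]
      rw [if_neg (by push_neg; intro _ h; linarith [hx.2])]
      simp
    have v2 : ∀ x ∈ Ioo (K - 1/K^2) K, |gam x| = K^2 := by
      intro x hx
      rw [gam_eq (k := k) (by simp only [← hKdef]; linarith [hx.1]) (by simp only [← hKdef]; linarith [hx.2])]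
      rw [if_pos ⟨hK2, hx.1, hx.2⟩, abs_of_pos hKpos]
    have v3 : ∀ x ∈ Ioo K (K + 1/K^2), |gam x| = K^2 := by
      intro x hx
      rw [gam_eq (k := k) (by simp only [← hKdef]; linarith [hx.1]) (by simp only [← hKdef]; linarith [hx.2])]
      rw [if_neg (by push_neg; intro _ _; linarith [hx.1]), if_pos ⟨hK2, hx.1, hx.2⟩,
        abs_neg, abs_of_pos hKpos]
    have v4 : ∀ x ∈ Ioo (K + 1/K^2) (K + 1/2), |gam x| = 0 := by
      intro x hx
      rw [gam_eq (k := k) (by simp only [← hKdef]; linarith [hx.1]) (by simp only [← hKdef]; linarith [hx.2])]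
      rw [if_neg (by push_neg; intro _ _; linarith [hx.1]),
          if_neg (by push_neg; intro _ _; linarith [hx.1])]
      simp
    have I1 : ∫ s in (K - 1/2)..(K - 1/K^2), |gam s| = 0 := by
      rw [intConst (by linarith) v1]; ring
    have I2 : ∫ s in (K - 1/K^2)..K, |gam s| = 1 := by
      rw [intConst (by linarith) v2]
      have : K^2 * (K - (K - 1/K^2)) = K^2 * (1/K^2) := by ring
      rw [this, hKe]
    have I3 : ∫ s in K..(K + 1/K^2), |gam s| = 1 := by
      rw [intConst (by linarith) v3]
      have : K^2 * (K + 1/K^2 - K) = K^2 * (1/K^2) := by ring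
      rw [this, hKe]
    have I4 : ∫ s in (K + 1/K^2)..(K + 1/2), |gam s| = 0 := by
      rw [intConst (by linarith) v4]; ring
    rw [← intervalIntegral.integral_add_adjacent_intervals (gam_abs_ii (K - 1/2) (K + 1/K^2)) (gam_abs_ii _ (K + 1/2)),
      ← intervalIntegral.integral_add_adjacent_intervals (gam_abs_ii (K - 1/2) K) (gam_abs_ii _ (K + 1/K^2)),
      ← intervalIntegral.integral_add_adjacent_intervals (gam_abs_ii (K - 1/2) (K - 1/K^2)) (gam_abs_ii _ K),
      I1, I2, I3, I4]
    norm_num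
  · have hK1 : K ≤ 1 := by
      rw [hKdef]
      have : k + 1 ≤ 2 := Int.lt_iff_add_one_le.mp hk
      have : k ≤ 1 := by omega
      exact_mod_cast this
    have v : ∀ x ∈ Ioo (K - 1/2) (K + 1/2), |gam x| = 0 := by
      intro x hx
      rw [gam_eq (k := k) (le_of_lt hx.1) hx.2]
      rw [if_neg (by push_neg; intro h; exfalso; simp only [← hKdef] at h; linarith),
          if_neg (by push_neg; intro h; exfalso; simp only [← hKdef] at h; linarith)]
      simp
    rw [intConst (by linarith) v]
    norm_num

lemma int_zero : ∀ n : ℕ, ∫ s in (0:ℝ)..((n:ℝ) + 3/2), gam s = 0 := by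
  intro n
  induction n with
  | zero =>
    rw [intervalIntegral.integral_congr (g := fun _ => (0:ℝ)) (fun x hx => by
      rw [uIcc_of_le (by norm_num : (0:ℝ) ≤ ((0:ℕ):ℝ) + 3/2)] at hx
      refine gam_zero ?_
      have := hx.2
      push_cast at this
      linarith)]
    simp
  | succ m ih =>
    have key : ∫ s in ((m:ℝ) + 3/2)..((m:ℝ) + 1 + 3/2), gam s = 0 := by
      have h1 : ((m:ℤ) + 2 : ℝ) - 1/2 = (m:ℝ) + 3/2 := by push_cast; ring
      have h2 : ((m:ℤ) + 2 : ℝ) + 1/2 = (m:ℝ) + 1 + 3/2 := by push_cast; ring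
      have hsp := spike (k := (m:ℤ) + 2) (by omega) (t := (m:ℝ) + 1 + 3/2)
        (by push_cast; linarith) (by push_cast; linarith)
      rw [show (((m:ℤ) + 2 : ℤ):ℝ) - 1/2 = (m:ℝ) + 3/2 by push_cast; ring] at hsp
      rw [hsp]
      have hh : (m:ℝ) + 1 + 3/2 = (((m:ℤ) + 2 : ℤ):ℝ) + 1/2 := by push_cast; ring
      rw [hh]
      have hf : ⌊((((m:ℤ) + 2 : ℤ):ℝ) + 1/2) + 1/2⌋ = (m:ℤ) + 3 := by
        apply floor_half <;> push_cast <;> linarith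
      unfold gg
      rw [hf, if_neg]
      push_neg
      intro _
      push_cast
      have h9 : (9:ℝ) ≤ ((m:ℝ) + 3)^2 := by nlinarith [Nat.cast_nonneg (α := ℝ) m]
      have habs : |(m:ℝ) + 2 + 1/2 - ((m:ℝ) + 3)| = 1/2 := by
        rw [show (m:ℝ) + 2 + 1/2 - ((m:ℝ) + 3) = -(1/2) by ring, abs_neg, abs_of_nonneg]
        norm_num
      rw [habs, div_lt_div_iff₀ (by nlinarith) (by norm_num)]
      nlinarith
    rw [← intervalIntegral.integral_add_adjacent_intervals (gam_ii 0 ((m:ℝ) + 3/2)) (gam_ii _ _), ih]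
    push_cast
    rw [key]
    simp

lemma ftc (t : ℝ) : gg t = ∫ s in (0:ℝ)..t, gam s := by
  rcases le_or_gt t (3/2) with ht | ht
  · rw [gg_zero ht]
    rw [intervalIntegral.integral_congr (g := fun _ => 0)
      (fun x hx => by
        apply gam_zero
        rcases le_total 0 t with h | h
        · rw [uIcc_of_le h] at hx; linarith [hx.2]
        · rw [uIcc_of_ge h] at hx; linarith [hx.2] )]
    simp
  · set k : ℤ := ⌊t + 1/2⌋ with hkdef
    have hk2 : 2 ≤ k := by
      rw [hkdef]
      apply Int.le_floor.2
      push_cast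
      linarith
    have h1 : (k:ℝ) - 1/2 ≤ t := by
      have := Int.floor_le (t + 1/2)
      rw [← hkdef] at this
      linarith
    have h2 : t < (k:ℝ) + 1/2 := by
      have := Int.lt_floor_add_one (t + 1/2)
      rw [← hkdef] at this
      linarith
    have hzero : ∫ s in (0:ℝ)..((k:ℝ) - 1/2), gam s = 0 := by
      have := int_zero (k - 2).toNat
      have hcast : (((k - 2).toNat : ℕ) : ℝ) = (k:ℝ) - 2 := by
        have h := Int.toNat_of_nonneg (show (0:ℤ) ≤ k - 2 by omega)
        exact_mod_cast congrArg (fun z : ℤ => (z:ℝ)) h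
      rw [show (((k - 2).toNat : ℕ) : ℝ) + 3/2 = (k:ℝ) - 1/2 by rw [hcast]; ring] at this
      exact this
    rw [← intervalIntegral.integral_add_adjacent_intervals (gam_ii 0 ((k:ℝ) - 1/2)) (gam_ii _ t),
      hzero, spike hk2 h1 (le_of_lt h2)]
    ring

lemma gg_bound (t : ℝ) : |gg t| ≤ 1 := by
  unfold gg
  split_ifs with h
  · have hA : (2:ℝ) ≤ (⌊t + 1/2⌋ : ℝ) := h.1
    have hApos : (0:ℝ) < (⌊t + 1/2⌋ : ℝ)^2 := by nlinarith
    have hmul : (⌊t + 1/2⌋ : ℝ)^2 * |t - (⌊t + 1/2⌋ : ℝ)| ≤ 1 := by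
      have := mul_le_mul_of_nonneg_left h.2 (le_of_lt hApos)
      have heq : (⌊t + 1/2⌋ : ℝ)^2 * (1/(⌊t + 1/2⌋ : ℝ)^2) = 1 := mul_one_div_cancel (ne_of_gt hApos)
      linarith
    have hnn : 0 ≤ (⌊t + 1/2⌋ : ℝ)^2 * |t - (⌊t + 1/2⌋ : ℝ)| :=
      mul_nonneg (le_of_lt hApos) (abs_nonneg _)
    rw [abs_le]
    constructor <;> linarith
  · simp

lemma gg_one (n : ℤ) (hn : 2 ≤ n) : gg (n:ℝ) = 1 := by
  have hn2 : (2:ℝ) ≤ (n:ℝ) := by exact_mod_cast hn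
  have hf : ⌊(n:ℝ) + 1/2⌋ = n := floor_half (by linarith) (by linarith)
  unfold gg
  rw [hf, if_pos ⟨hn2, by simp; positivity⟩]
  simp

lemma m_bound (t : ℝ) : ∫ s in Set.Ioc t (t + 1), |gam s| ≤ 4 := by
  set m : ℤ := ⌊t + 1/2⌋ with hmdef
  have h1 : (m:ℝ) - 1/2 ≤ t := by
    have := Int.floor_le (t + 1/2); rw [← hmdef] at this; linarith
  have h2 : t < (m:ℝ) + 1/2 := by
    have := Int.lt_floor_add_one (t + 1/2); rw [← hmdef] at this; linarith
  have hsub : Set.Ioc t (t + 1) ⊆ Set.Icc ((m:ℝ) - 1/2) ((m:ℝ) + 3/2) := by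
    intro x hx
    exact ⟨by linarith [hx.1], by linarith [hx.2]⟩
  have hI : IntegrableOn (fun s => |gam s|) (Set.Icc ((m:ℝ) - 1/2) ((m:ℝ) + 3/2)) volume :=
    (gam_loc.integrableOn_isCompact isCompact_Icc).abs
  have step1 : ∫ s in Set.Ioc t (t + 1), |gam s| ≤ ∫ s in Set.Icc ((m:ℝ) - 1/2) ((m:ℝ) + 3/2), |gam s| := by
    apply setIntegral_mono_set hI
    · exact Filter.Eventually.of_forall (fun x => abs_nonneg _)
    · exact HasSubset.Subset.eventuallyLE hsub
  have step2 : ∫ s in Set.Icc ((m:ℝ) - 1/2) ((m:ℝ) + 3/2), |gam s|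
      = ∫ s in ((m:ℝ) - 1/2)..((m:ℝ) + 3/2), |gam s| := by
    rw [integral_Icc_eq_integral_Ioc, intervalIntegral.integral_of_le (by linarith)]
  have step3 : ∫ s in ((m:ℝ) - 1/2)..((m:ℝ) + 3/2), |gam s| ≤ 4 := by
    rw [← intervalIntegral.integral_add_adjacent_intervals
      (gam_abs_ii ((m:ℝ) - 1/2) ((m:ℝ) + 1/2)) (gam_abs_ii _ ((m:ℝ) + 3/2))]
    have hA := spikeAbs m
    have hB := spikeAbs (m + 1)
    rw [show ((m + 1 : ℤ):ℝ) - 1/2 = (m:ℝ) + 1/2 by push_cast; ring,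
        show ((m + 1 : ℤ):ℝ) + 1/2 = (m:ℝ) + 3/2 by push_cast; ring] at hB
    linarith
  linarith


def SS : Set ℝ := ⋃ n : ℕ, Ioo ((n:ℝ) + 2 - 1/((n:ℝ)+2)^2) ((n:ℝ) + 2 + 1/((n:ℝ)+2)^2)

lemma SS_meas : MeasurableSet SS := MeasurableSet.iUnion (fun _ => measurableSet_Ioo)

lemma SS_summable : Summable (fun n : ℕ => 2 * (1/((n:ℝ)+2)^2)) := by
  have h1 : Summable (fun n : ℕ => 1/((n:ℝ))^2) :=
    Real.summable_one_div_nat_pow.mpr one_lt_two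
  have h2 := (summable_nat_add_iff (f := fun n : ℕ => 1/((n:ℝ))^2) 2).mpr h1
  exact (h2.congr (fun n => by push_cast; ring)).mul_left 2

lemma SS_vol : volume SS < ⊤ := by
  calc volume SS ≤ ∑' n : ℕ, volume (Ioo ((n:ℝ) + 2 - 1/((n:ℝ)+2)^2) ((n:ℝ) + 2 + 1/((n:ℝ)+2)^2)) :=
        measure_iUnion_le _
  _ = ∑' n : ℕ, ENNReal.ofReal (2 * (1/((n:ℝ)+2)^2)) := by
        congr 1; funext n; rw [Real.volume_Ioo]; congr 1; ring
  _ = ENNReal.ofReal (∑' n : ℕ, 2 * (1/((n:ℝ)+2)^2)) :=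
        (ENNReal.ofReal_tsum_of_nonneg (fun n => by positivity) SS_summable).symm
  _ < ⊤ := ENNReal.ofReal_lt_top

lemma SS_ind_int : Integrable (SS.indicator (fun _ => (1:ℝ))) volume := by
  rw [integrable_indicator_iff SS_meas]
  exact integrableOn_const SS_vol.ne

lemma gg_le_ind (t : ℝ) : ‖(gg t) ^ 2‖ ≤ SS.indicator (fun _ => (1:ℝ)) t := by
  by_cases hgz : gg t = 0
  · rw [hgz]
    have h0 : ‖(0:ℝ) ^ 2‖ = 0 := by norm_num
    rw [h0]
    exact Set.indicator_nonneg (fun _ _ => by norm_num) t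
  · have htS : t ∈ SS := by
      unfold gg at hgz
      split_ifs at hgz with h
      · have hA : (2:ℝ) ≤ (⌊t + 1/2⌋ : ℝ) := h.1
        have hApos : (0:ℝ) < (⌊t + 1/2⌋ : ℝ)^2 := by nlinarith
        have hlt : |t - (⌊t + 1/2⌋ : ℝ)| < 1/(⌊t + 1/2⌋ : ℝ)^2 := by
          rcases lt_or_eq_of_le h.2 with h' | h'
          · exact h'
          · exfalso
            apply hgz
            rw [h', mul_one_div_cancel (ne_of_gt hApos)]
            ring
        have hk2 : 2 ≤ ⌊t + 1/2⌋ := by exact_mod_cast hA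
        refine mem_iUnion.2 ⟨(⌊t + 1/2⌋ - 2).toNat, ?_⟩
        have hcast : (((⌊t + 1/2⌋ - 2).toNat : ℕ) : ℝ) + 2 = (⌊t + 1/2⌋ : ℝ) := by
          have hh := Int.toNat_of_nonneg (show (0:ℤ) ≤ ⌊t + 1/2⌋ - 2 by omega)
          have : (((⌊t + 1/2⌋ - 2).toNat : ℕ) : ℝ) = (⌊t + 1/2⌋ : ℝ) - 2 := by
            exact_mod_cast congrArg (fun z : ℤ => (z:ℝ)) hh
          linarith
        rw [mem_Ioo, hcast]
        rw [abs_lt] at hlt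
        constructor <;> linarith [hlt.1, hlt.2]
      · exact absurd rfl hgz
    rw [Set.indicator_of_mem htS]
    have := gg_bound t
    rw [Real.norm_eq_abs, abs_pow]
    nlinarith [abs_nonneg (gg t)]

lemma gg_sq_int : IntegrableOn (fun t => (gg t) ^ 2) (Set.Ioi (0:ℝ)) volume := by
  refine Integrable.mono' SS_ind_int.integrableOn
    ((measurable_gg.pow_const 2).aestronglyMeasurable) ?_
  exact Filter.Eventually.of_forall gg_le_ind

/-- The counterexample of Remark 2.4: the conclusion of Lemma 2.3 fails for
`p = 1` even for `X = ℝ`. There are functions `g, γ : ℝ → ℝ` with `γ` locally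
integrable, `g` the primitive of `γ` vanishing at `0`, `g` bounded and
square-integrable on `(0,∞)`, `sup_t ∫_t^{t+1} |γ| < ∞`, and yet `g(t)` does not
tend to `0` as `t → ∞`; indeed `g(n) = 1` for every integer `n ≥ 2`. -/
theorem stmt_3 :
    ∃ g γ : ℝ → ℝ,
      LocallyIntegrable γ volume ∧
      (∀ t : ℝ, g t = ∫ s in (0 : ℝ)..t, γ s) ∧
      (∃ C : ℝ, ∀ t : ℝ, |g t| ≤ C) ∧
      IntegrableOn (fun t => (g t) ^ 2) (Set.Ioi (0 : ℝ)) volume ∧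
      (∃ M : ℝ, ∀ t : ℝ, ∫ s in Set.Ioc t (t + 1), |γ s| ≤ M) ∧
      ¬ Tendsto g atTop (nhds 0) ∧
      (∀ n : ℤ, 2 ≤ n → g (n : ℝ) = 1) := by
  refine ⟨gg, gam, gam_loc, ftc, ⟨1, gg_bound⟩, gg_sq_int, ⟨4, m_bound⟩, ?_, fun n hn => gg_one n hn⟩
  intro h
  obtain ⟨N, hN⟩ := (Metric.tendsto_atTop.mp h) (1/2) (by norm_num)
  have h2 : (2:ℤ) ≤ max 2 ⌈N⌉ := le_max_left _ _
  have hn : N ≤ ((max 2 ⌈N⌉ : ℤ):ℝ) := by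
    refine le_trans (Int.le_ceil N) ?_
    exact_mod_cast le_max_right 2 ⌈N⌉
  have := hN ((max 2 ⌈N⌉ : ℤ):ℝ) hn
  rw [gg_one _ h2] at this
  simp [Real.dist_eq] at this
  norm_num at this
end

section
/- Let ζ ∈ (0,1), K > 0, and let t₀ < T be real numbers. Let Φ : [t₀, T] → ℝ be continuous on [t₀, T] and differentiable on (t₀, T) with Φ(t) > 0 for all t ∈ [t₀, T], and let h : [t₀, T] → ℝ be continuous with h(t) ≥ 0. Assume that for all t ∈ (t₀, T): Φ'(t) ≤ −h(t)² and Φ(t)^{1−ζ} ≤ K·h(t). Then ∫_{t₀}^{T} h(t) dt ≤ (K/ζ)·Φ(t₀)^ζ. -/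
open Set

/-- The abstract Łojasiewicz-type integration argument of the proof of
Theorem 2.8 (formulas (4.18)–(4.26)): if `Φ > 0` satisfies `Φ' ≤ −h²` and the
Łojasiewicz-type estimate `Φ^{1−ζ} ≤ K·h` on `(t₀,T)`, with `h ≥ 0` continuous,
then `∫_{t₀}^T h ≤ (K/ζ)·Φ(t₀)^ζ`. -/
theorem stmt_10
    (ζ K : ℝ) (hζ : ζ ∈ Set.Ioo (0 : ℝ) 1) (hK : 0 < K)
    (t₀ T : ℝ) (hT : t₀ < T)
    (Φ Φ' h : ℝ → ℝ)
    (hΦcont : ContinuousOn Φ (Set.Icc t₀ T))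
    (hΦderiv : ∀ t ∈ Set.Ioo t₀ T, HasDerivAt Φ (Φ' t) t)
    (hΦpos : ∀ t ∈ Set.Icc t₀ T, 0 < Φ t)
    (hhcont : ContinuousOn h (Set.Icc t₀ T))
    (hhpos : ∀ t ∈ Set.Icc t₀ T, 0 ≤ h t)
    (hdecay : ∀ t ∈ Set.Ioo t₀ T, Φ' t ≤ -(h t) ^ 2)
    (hloj : ∀ t ∈ Set.Ioo t₀ T, (Φ t) ^ (1 - ζ) ≤ K * h t) :
    ∫ t in t₀..T, h t ≤ K / ζ * (Φ t₀) ^ ζ := by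
  obtain ⟨hζ0, hζ1⟩ := hζ
  -- the Liapounov-type functional
  set F : ℝ → ℝ := fun t => K / ζ * (Φ t) ^ ζ + ∫ s in t₀..t, h s with hF
  set F' : ℝ → ℝ := fun t => K / ζ * (ζ * (Φ t) ^ (ζ - 1) * Φ' t) + h t with hF'
  -- integrability of h on subintervals
  have hint : ∀ t ∈ Set.Icc t₀ T, IntervalIntegrable h MeasureTheory.volume t₀ t := by
    intro t ht
    apply (hhcont.mono ?_).intervalIntegrable
    rw [Set.uIcc_of_le ht.1]
    exact Set.Icc_subset_Icc le_rfl ht.2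
  -- continuity of F on [t₀, T]
  have hFcont : ContinuousOn F (Set.Icc t₀ T) := by
    apply ContinuousOn.add
    · exact (continuousOn_const.mul (hΦcont.rpow_const fun t ht => Or.inl (hΦpos t ht).ne'))
    · have := intervalIntegral.continuousOn_primitive_interval'
        (hint T ⟨hT.le, le_rfl⟩) Set.left_mem_uIcc
      rwa [Set.uIcc_of_le hT.le] at this
  -- F has derivative F' on the interior
  have hFderiv : ∀ t ∈ Set.Ioo t₀ T, HasDerivAt F (F' t) t := by
    intro t ht
    have htI : t ∈ Set.Icc t₀ T := Set.Ioo_subset_Icc_self ht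
    have hca : ContinuousAt h t :=
      (hhcont t htI).continuousAt (Icc_mem_nhds ht.1 ht.2)
    have h1' := (((hΦderiv t ht).rpow_const (p := ζ) (Or.inl (hΦpos t htI).ne'))).const_mul (K / ζ)
    have h1 : HasDerivAt (fun t => K / ζ * (Φ t) ^ ζ)
        (K / ζ * (ζ * (Φ t) ^ (ζ - 1) * Φ' t)) t := by
      exact h1'.congr_deriv (by ring)
    have h2 : HasDerivAt (fun t => ∫ s in t₀..t, h s) (h t) t :=
      intervalIntegral.integral_hasDerivAt_right (hint t htI)
        ((hhcont.mono Set.Ioo_subset_Icc_self).stronglyMeasurableAtFilter isOpen_Ioo t ht) hca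
    exact h1.add h2
  -- the derivative is nonpositive
  have hF'neg : ∀ t ∈ Set.Ioo t₀ T, F' t ≤ 0 := by
    intro t ht
    have htI : t ∈ Set.Icc t₀ T := Set.Ioo_subset_Icc_self ht
    have hΦt := hΦpos t htI
    have hht : 0 < h t := by
      rcases lt_or_eq_of_le (hhpos t htI) with hp | hp
      · exact hp
      · exfalso
        have := hloj t ht
        rw [← hp, mul_zero] at this
        exact absurd this (not_le.mpr (Real.rpow_pos_of_pos hΦt _))
    -- h t ≤ K * Φ t ^ (ζ - 1) * h t ^ 2
    have key : h t ≤ K * (Φ t) ^ (ζ - 1) * (h t) ^ 2 := by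
      have hmul : (Φ t) ^ (1 - ζ) * ((Φ t) ^ (ζ - 1) * h t) ≤
          K * h t * ((Φ t) ^ (ζ - 1) * h t) := by
        apply mul_le_mul_of_nonneg_right (hloj t ht)
        positivity
      have hpow : (Φ t) ^ (1 - ζ) * (Φ t) ^ (ζ - 1) = 1 := by
        rw [← Real.rpow_add hΦt]; norm_num
      calc h t = (Φ t) ^ (1 - ζ) * (Φ t) ^ (ζ - 1) * h t := by rw [hpow, one_mul]
        _ = (Φ t) ^ (1 - ζ) * ((Φ t) ^ (ζ - 1) * h t) := by ring
        _ ≤ K * h t * ((Φ t) ^ (ζ - 1) * h t) := hmul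
        _ = K * (Φ t) ^ (ζ - 1) * (h t) ^ 2 := by ring
    have hd : Φ' t ≤ -(h t) ^ 2 := hdecay t ht
    have hΦpow : 0 < (Φ t) ^ (ζ - 1) := Real.rpow_pos_of_pos hΦt _
    have : K / ζ * (ζ * (Φ t) ^ (ζ - 1) * Φ' t) = K * (Φ t) ^ (ζ - 1) * Φ' t := by
      field_simp
    rw [hF']
    simp only
    rw [this]
    have h3 : K * (Φ t) ^ (ζ - 1) * Φ' t ≤ K * (Φ t) ^ (ζ - 1) * (-(h t) ^ 2) := by
      apply mul_le_mul_of_nonneg_left hd (by positivity)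
    nlinarith
  -- F is antitone on [t₀, T]
  have hanti : AntitoneOn F (Set.Icc t₀ T) := by
    apply antitoneOn_of_hasDerivWithinAt_nonpos (convex_Icc t₀ T) hFcont
        (f' := F') ?_ ?_
    · intro t ht
      rw [interior_Icc] at ht
      exact (hFderiv t ht).hasDerivWithinAt
    · intro t ht
      rw [interior_Icc] at ht
      exact hF'neg t ht
  have hle : F T ≤ F t₀ := hanti ⟨le_rfl, hT.le⟩ ⟨hT.le, le_rfl⟩ hT.le
  have hFt₀ : F t₀ = K / ζ * (Φ t₀) ^ ζ := by simp [hF]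
  have hΦT : 0 ≤ K / ζ * (Φ T) ^ ζ := by
    have := Real.rpow_pos_of_pos (hΦpos T ⟨hT.le, le_rfl⟩) ζ
    positivity
  have : ∫ t in t₀..T, h t = F T - K / ζ * (Φ T) ^ ζ := by simp only [hF]; ring
  rw [this]
  rw [hFt₀] at hle
  linarith
end
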